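/- arXiv:0903.5259 — 2 statements merged into one kernel-verified Lean document; each statement's English description precedes it below -/
import Mathlib

section
/- For every rule ρ↑ of SNEL, ρ↑ is derivable in the system {i↓, i↑, s, ρ↓}; dually, every rule ρ↓ of SNEL is derivable in {i↓, i↑, s, ρ↑}. Concretely: any instance rewriting S{T} to S{R} via ρ↑ (where ρ↓ rewrites S{R̄} to S{T̄}) can be simulated by one instance of i↑, one of ρ↓, one of s, and one of i↓. -/
/-!
Deep-inference presentation of NEL (non-commutative exponential linear logic),
following "A System of Interaction and Structure IV: The Exponentials and Decomposition".
-/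

/-- NEL structures: atoms (with a polarity), the unit ∘, par ⅋, tensor ⊗,
seq ◁, and the modalities ? and !. -/
inductive Str : Type
  | atom : ℕ → Bool → Str
  | unit : Str
  | par : Str → Str → Str
  | ten : Str → Str → Str
  | seq : Str → Str → Str
  | quest : Str → Str
  | bang : Str → Str

namespace Str

/-- De Morgan negation, pushed to the atoms; seq does not swap its arguments. -/
def neg : Str → Str
  | atom n b => atom n (!b)
  | unit => unit
  | par a b => ten (neg a) (neg b)
  | ten a b => par (neg a) (neg b)
  | seq a b => seq (neg a) (neg b)
  | quest a => bang (neg a)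
  | bang a => quest (neg a)

/-- The syntactic equivalence `=` on NEL structures: associativity of ⅋, ⊗, ◁,
commutativity of ⅋ and ⊗, unit laws for ∘, and contextual closure. -/
inductive Equiv : Str → Str → Prop
  | refl (a) : Equiv a a
  | symm {a b} : Equiv a b → Equiv b a
  | trans {a b c} : Equiv a b → Equiv b c → Equiv a c
  | parAssoc (a b c) : Equiv (par (par a b) c) (par a (par b c))
  | tenAssoc (a b c) : Equiv (ten (ten a b) c) (ten a (ten b c))
  | seqAssoc (a b c) : Equiv (seq (seq a b) c) (seq a (seq b c))
  | parComm (a b) : Equiv (par a b) (par b a)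
  | tenComm (a b) : Equiv (ten a b) (ten b a)
  | parUnit (a) : Equiv (par unit a) a
  | tenUnit (a) : Equiv (ten unit a) a
  | seqUnitL (a) : Equiv (seq unit a) a
  | seqUnitR (a) : Equiv (seq a unit) a
  | parCongr {a a' b b'} : Equiv a a' → Equiv b b' → Equiv (par a b) (par a' b')
  | tenCongr {a a' b b'} : Equiv a a' → Equiv b b' → Equiv (ten a b) (ten a' b')
  | seqCongr {a a' b b'} : Equiv a a' → Equiv b b' → Equiv (seq a b) (seq a' b')
  | questCongr {a a'} : Equiv a a' → Equiv (quest a) (quest a')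
  | bangCongr {a a'} : Equiv a a' → Equiv (bang a) (bang a')

end Str

/-- Contexts: structures with a hole that is not in the scope of a negation. -/
inductive Ctx : Type
  | hole
  | parL (C : Ctx) (T : Str)
  | parR (T : Str) (C : Ctx)
  | tenL (C : Ctx) (T : Str)
  | tenR (T : Str) (C : Ctx)
  | seqL (C : Ctx) (T : Str)
  | seqR (T : Str) (C : Ctx)
  | quest (C : Ctx)
  | bang (C : Ctx)

/-- Plugging a structure into the hole of a context. -/
def Ctx.fill : Ctx → Str → Str
  | .hole, R => R
  | .parL C T, R => .par (C.fill R) T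
  | .parR T C, R => .par T (C.fill R)
  | .tenL C T, R => .ten (C.fill R) T
  | .tenR T C, R => .ten T (C.fill R)
  | .seqL C T, R => .seq (C.fill R) T
  | .seqR T C, R => .seq T (C.fill R)
  | .quest C, R => .quest (C.fill R)
  | .bang C, R => .bang (C.fill R)

/-- A set of (instances of) inference rules, given as a relation
from premise to conclusion. -/
abbrev Rules := Str → Str → Prop

/-- An instance of a rule of `r` applied deep inside a context. -/
def DeepStep (r : Rules) (P Q : Str) : Prop :=
  ∃ (C : Ctx) (a b : Str), r a b ∧ P = C.fill a ∧ Q = C.fill b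

/-- A single inference step: a deep rule application, modulo the
syntactic equivalence on premise and conclusion. -/
def Step (r : Rules) (P Q : Str) : Prop :=
  ∃ P' Q', Str.Equiv P P' ∧ DeepStep r P' Q' ∧ Str.Equiv Q' Q

/-- A derivation in the system `r` from premise `T` (top) to conclusion `R`
(bottom): a finite chain of inference steps modulo syntactic equivalence. -/
def Deriv (r : Rules) (T R : Str) : Prop :=
  Str.Equiv T R ∨ Relation.TransGen (Step r) T R

/- The rules of SNEL, written premise → conclusion (read downwards). -/

/-- atomic interaction ai↓ : S{∘} → S⟨a ⅋ ā⟩ -/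
inductive aiDown : Str → Str → Prop
  | mk (n : ℕ) (b : Bool) : aiDown .unit (.par (.atom n b) (.atom n (!b)))

/-- atomic cut ai↑ : S⟨a ⊗ ā⟩ → S{∘} -/
inductive aiUp : Str → Str → Prop
  | mk (n : ℕ) (b : Bool) : aiUp (.ten (.atom n b) (.atom n (!b))) .unit

/-- switch s : S⟨(R ⅋ U) ⊗ T⟩ → S⟨(R ⊗ T) ⅋ U⟩ -/
inductive sw : Str → Str → Prop
  | mk (R U T : Str) : sw (.ten (.par R U) T) (.par (.ten R T) U)

/-- seq q↓ : S⟨(R ◁ T) ⅋ (U ◁ V)⟩ → S⟨(R ⅋ U) ◁ (T ⅋ V)⟩ -/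
inductive qDown : Str → Str → Prop
  | mk (R T U V : Str) :
      qDown (.par (.seq R T) (.seq U V)) (.seq (.par R U) (.par T V))

/-- coseq q↑ : S⟨(R ⊗ T) ◁ (U ⊗ V)⟩ → S⟨(R ◁ U) ⊗ (T ◁ V)⟩ -/
inductive qUp : Str → Str → Prop
  | mk (R T U V : Str) :
      qUp (.seq (.ten R T) (.ten U V)) (.ten (.seq R U) (.seq T V))

/-- promotion p↓ : S{!(R ⅋ T)} → S⟨!R ⅋ ?T⟩ -/
inductive pDown : Str → Str → Prop
  | mk (R T : Str) : pDown (.bang (.par R T)) (.par (.bang R) (.quest T))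

/-- copromotion p↑ : S⟨?T ⊗ !R⟩ → S{?(T ⊗ R)} -/
inductive pUp : Str → Str → Prop
  | mk (T R : Str) : pUp (.ten (.quest T) (.bang R)) (.quest (.ten T R))

/-- empty e↓ : S{∘} → S{!∘} -/
inductive eDown : Str → Str → Prop
  | mk : eDown .unit (.bang .unit)

/-- coempty e↑ : S{?∘} → S{∘} -/
inductive eUp : Str → Str → Prop
  | mk : eUp (.quest .unit) .unit

/-- weakening w↓ : S{∘} → S{?R} -/
inductive wDown : Str → Str → Prop
  | mk (R : Str) : wDown .unit (.quest R)

/-- coweakening w↑ : S{!R} → S{∘} -/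
inductive wUp : Str → Str → Prop
  | mk (R : Str) : wUp (.bang R) .unit

/-- absorption b↓ : S⟨?R ⅋ R⟩ → S{?R} -/
inductive bDown : Str → Str → Prop
  | mk (R : Str) : bDown (.par (.quest R) R) (.quest R)

/-- coabsorption b↑ : S{!R} → S⟨!R ⊗ R⟩ -/
inductive bUp : Str → Str → Prop
  | mk (R : Str) : bUp (.bang R) (.ten (.bang R) R)

/-- digging g↓ : S{??R} → S{?R} -/
inductive gDown : Str → Str → Prop
  | mk (R : Str) : gDown (.quest (.quest R)) (.quest R)

/-- codigging g↑ : S{!R} → S{!!R} -/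
inductive gUp : Str → Str → Prop
  | mk (R : Str) : gUp (.bang R) (.bang (.bang R))

/-- general interaction i↓ : S{∘} → S⟨R ⅋ R̄⟩ -/
inductive iDown : Str → Str → Prop
  | mk (R : Str) : iDown .unit (.par R R.neg)

/-- general cut i↑ : S⟨R ⊗ R̄⟩ → S{∘} -/
inductive iUp : Str → Str → Prop
  | mk (R : Str) : iUp (.ten R R.neg) .unit

/-- The unit axiom ∘↓ of NEL.  It has no premise; within a derivation
(which always has a premise) it can therefore only act vacuously, which
we model by the trivial rewrite ∘ → ∘. -/
inductive unitAx : Str → Str → Prop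
  | mk : unitAx .unit .unit

/-- System SNEL. -/
def snel : Rules :=
  aiDown ⊔ aiUp ⊔ sw ⊔ qDown ⊔ qUp ⊔ pDown ⊔ pUp ⊔ eDown ⊔ eUp ⊔
    wDown ⊔ wUp ⊔ bDown ⊔ bUp ⊔ gDown ⊔ gUp

/-- The down fragment of SNEL together with the unit axiom: system NEL. -/
def nel : Rules :=
  unitAx ⊔ aiDown ⊔ sw ⊔ qDown ⊔ pDown ⊔ eDown ⊔ wDown ⊔ bDown ⊔ gDown

/-- The system {s, q↓, q↑}. -/
def swq : Rules := sw ⊔ qDown ⊔ qUp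

/-- The hard core SNELh = {s, q↓, q↑, p↓, p↑}. -/
def snelh : Rules := sw ⊔ qDown ⊔ qUp ⊔ pDown ⊔ pUp

theorem Str.neg_neg (a : Str) : a.neg.neg = a := by
  induction a <;> simp [Str.neg, *]

/-- Composition of contexts. -/
def Ctx.comp : Ctx → Ctx → Ctx
  | .hole, D => D
  | .parL C T, D => .parL (C.comp D) T
  | .parR T C, D => .parR T (C.comp D)
  | .tenL C T, D => .tenL (C.comp D) T
  | .tenR T C, D => .tenR T (C.comp D)
  | .seqL C T, D => .seqL (C.comp D) T
  | .seqR T C, D => .seqR T (C.comp D)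
  | .quest C, D => .quest (C.comp D)
  | .bang C, D => .bang (C.comp D)

theorem Ctx.fill_comp (C D : Ctx) (a : Str) :
    (C.comp D).fill a = C.fill (D.fill a) := by
  induction C <;> simp [Ctx.comp, Ctx.fill, *]

theorem Ctx.fill_congr (C : Ctx) {a b : Str} (h : Str.Equiv a b) :
    Str.Equiv (C.fill a) (C.fill b) := by
  induction C <;> simp only [Ctx.fill] <;>
    first
      | exact h
      | exact Str.Equiv.parCongr (by assumption) (.refl _)
      | exact Str.Equiv.parCongr (.refl _) (by assumption)
      | exact Str.Equiv.tenCongr (by assumption) (.refl _)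
      | exact Str.Equiv.tenCongr (.refl _) (by assumption)
      | exact Str.Equiv.seqCongr (by assumption) (.refl _)
      | exact Str.Equiv.seqCongr (.refl _) (by assumption)
      | exact Str.Equiv.questCongr (by assumption)
      | exact Str.Equiv.bangCongr (by assumption)

/-- The common simulation: if `r a b` implies `r' b.neg a.neg`, then any step
of `r` can be simulated by i↓, s, r', i↑. -/
theorem sim_step (r r' : Rules) (h : ∀ a b, r a b → r' b.neg a.neg) :
    ∀ P Q, Step r P Q →
      ∃ V₁ V₂ V₃, Step iDown P V₁ ∧ Step sw V₁ V₂ ∧ Step r' V₂ V₃ ∧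
        Step iUp V₃ Q := by
  rintro P Q ⟨P', Q', hP, ⟨C, a, b, hab, rfl, rfl⟩, hQ⟩
  refine ⟨C.fill (.ten a (.par b b.neg)),
          C.fill (.par (.ten b.neg a) b),
          C.fill (.par (.ten a.neg a) b), ?_, ?_, ?_, ?_⟩
  · refine ⟨(C.comp (.tenR a .hole)).fill .unit,
      (C.comp (.tenR a .hole)).fill (.par b b.neg),
      ?_, ⟨_, _, _, iDown.mk b, rfl, rfl⟩, ?_⟩
    · rw [Ctx.fill_comp]
      exact hP.trans (C.fill_congr
        ((Str.Equiv.tenUnit a).symm.trans (Str.Equiv.tenComm _ _)) )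
    · rw [Ctx.fill_comp]; exact .refl _
  · refine ⟨C.fill (.ten (.par b.neg b) a), _, ?_,
      ⟨C, _, _, sw.mk b.neg b a, rfl, rfl⟩, .refl _⟩
    exact C.fill_congr ((Str.Equiv.tenComm _ _).trans
      (Str.Equiv.tenCongr (Str.Equiv.parComm _ _) (.refl _)))
  · exact ⟨_, _, .refl _,
      ⟨C.comp (.parL (.tenL .hole a) b), b.neg, a.neg, h a b hab,
        by rw [Ctx.fill_comp]; rfl, by rw [Ctx.fill_comp]; rfl⟩, .refl _⟩
  · refine ⟨(C.comp (.parL .hole b)).fill (.ten a a.neg),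
      (C.comp (.parL .hole b)).fill .unit,
      ?_, ⟨_, _, _, iUp.mk a, rfl, rfl⟩, ?_⟩
    · rw [Ctx.fill_comp]
      exact C.fill_congr (Str.Equiv.parCongr (Str.Equiv.tenComm _ _) (.refl _))
    · rw [Ctx.fill_comp]
      exact (C.fill_congr (Str.Equiv.parUnit b)).trans hQ

/-- For every rule ρ↓ of SNEL, rewriting S{T} to S{R}, with
dual up rule ρ↑ rewriting S{R̄} to S{T̄}: the rule ρ↑ is derivable in
{i↓, i↑, s, ρ↓} — any instance of ρ↑ can be simulated by one instance of i↓,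
one of s, one of ρ↓ and one of i↑ — and dually ρ↓ is derivable in
{i↓, i↑, s, ρ↑}. -/
theorem up_rules_from_down_rules
    (rDown rUp : Str → Str → Prop)
    (hdual : ∀ a b, rUp a b ↔ rDown b.neg a.neg) :
    (∀ P Q, Step rUp P Q →
      ∃ V₁ V₂ V₃, Step iDown P V₁ ∧ Step sw V₁ V₂ ∧ Step rDown V₂ V₃ ∧
        Step iUp V₃ Q) ∧
    (∀ P Q, Step rDown P Q →
      ∃ V₁ V₂ V₃, Step iDown P V₁ ∧ Step sw V₁ V₂ ∧ Step rUp V₂ V₃ ∧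
        Step iUp V₃ Q) := by
  constructor
  · exact sim_step rUp rDown (fun a b hab => (hdual a b).mp hab)
  · exact sim_step rDown rUp (fun a b hab => (hdual b.neg a.neg).mpr
      (by rw [Str.neg_neg, Str.neg_neg]; exact hab))
end

section
/- The rule e↓ permutes over each of the rules e↑, ai↓, ai↑, s, q↓, q↑, p↓, p↑, w↑, and g↓ by the system {s, q↓, q↑}: whenever an instance of one of these rules ρ is immediately followed (reading bottom-up) by an instance of e↓, the two-step derivation can be replaced by a derivation with the same premise and conclusion in which a (possibly empty) derivation in {s, q↓, q↑} is at the bottom, then one instance of ρ, then one instance of e↓ at the top. -/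
-- ===================== Infrastructure =====================
namespace Str

attribute [refl] Equiv.refl

theorem Equiv.pL {a a' b : Str} (h : Equiv a a') : Equiv (par a b) (par a' b) :=
  Equiv.parCongr h (Equiv.refl b)
theorem Equiv.pR {a b b' : Str} (h : Equiv b b') : Equiv (par a b) (par a b') :=
  Equiv.parCongr (Equiv.refl a) h
theorem Equiv.tL {a a' b : Str} (h : Equiv a a') : Equiv (ten a b) (ten a' b) :=
  Equiv.tenCongr h (Equiv.refl b)
theorem Equiv.tR {a b b' : Str} (h : Equiv b b') : Equiv (ten a b) (ten a b') :=
  Equiv.tenCongr (Equiv.refl a) h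
theorem Equiv.sL {a a' b : Str} (h : Equiv a a') : Equiv (seq a b) (seq a' b) :=
  Equiv.seqCongr h (Equiv.refl b)
theorem Equiv.sR {a b b' : Str} (h : Equiv b b') : Equiv (seq a b) (seq a b') :=
  Equiv.seqCongr (Equiv.refl a) h

/-- a ⅋ ∘ ≡ a -/
theorem Equiv.parUnitR (a : Str) : Equiv (par a unit) a :=
  (Equiv.parComm a unit).trans (Equiv.parUnit a)
theorem Equiv.tenUnitR (a : Str) : Equiv (ten a unit) a :=
  (Equiv.tenComm a unit).trans (Equiv.tenUnit a)

instance setoid : Setoid Str := ⟨Equiv, ⟨Equiv.refl, Equiv.symm, Equiv.trans⟩⟩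

end Str

namespace Ctx

/-- Composition of contexts: `(C.comp D).fill x = C.fill (D.fill x)`. -/
def comp_s5 : Ctx → Ctx → Ctx
  | hole, D => D
  | parL C T, D => parL (C.comp_s5 D) T
  | parR T C, D => parR T (C.comp_s5 D)
  | tenL C T, D => tenL (C.comp_s5 D) T
  | tenR T C, D => tenR T (C.comp_s5 D)
  | seqL C T, D => seqL (C.comp_s5 D) T
  | seqR T C, D => seqR T (C.comp_s5 D)
  | quest C, D => quest (C.comp_s5 D)
  | bang C, D => bang (C.comp_s5 D)

theorem fill_comp_s5 (C D : Ctx) (x : Str) : (C.comp_s5 D).fill x = C.fill (D.fill x) := by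
  induction C <;> simp [comp_s5, Ctx.fill, *]

theorem fill_congr_s5 (C : Ctx) {a b : Str} (h : Str.Equiv a b) :
    Str.Equiv (C.fill a) (C.fill b) := by
  induction C with
  | hole => exact h
  | parL C T ih => exact ih.pL
  | parR T C ih => exact ih.pR
  | tenL C T ih => exact ih.tL
  | tenR T C ih => exact ih.tR
  | seqL C T ih => exact ih.sL
  | seqR T C ih => exact ih.sR
  | quest C ih => exact Str.Equiv.questCongr ih
  | bang C ih => exact Str.Equiv.bangCongr ih

end Ctx

-- ===================== Step / Deriv toolkit =====================

theorem DeepStep.fill {r : Rules} (C : Ctx) {a b : Str} (h : DeepStep r a b) :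
    DeepStep r (C.fill a) (C.fill b) := by
  obtain ⟨D, x, y, hr, ha, hb⟩ := h
  exact ⟨C.comp_s5 D, x, y, hr, by rw [ha, Ctx.fill_comp_s5], by rw [hb, Ctx.fill_comp_s5]⟩

theorem Step.fill {r : Rules} (C : Ctx) {a b : Str} (h : Step r a b) :
    Step r (C.fill a) (C.fill b) := by
  obtain ⟨P', Q', h1, h2, h3⟩ := h
  exact ⟨C.fill P', C.fill Q', Ctx.fill_congr_s5 C h1, h2.fill C, Ctx.fill_congr_s5 C h3⟩

theorem Step.equiv {r : Rules} {a b a' b' : Str} (h : Step r a b)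
    (ha : Str.Equiv a' a) (hb : Str.Equiv b b') : Step r a' b' := by
  obtain ⟨P', Q', h1, h2, h3⟩ := h
  exact ⟨P', Q', ha.trans h1, h2, h3.trans hb⟩

/-- Build a step from a bare rule instance. -/
theorem Step.mk' {r : Rules} {x y a b : Str} (hr : r x y)
    (ha : Str.Equiv a x) (hb : Str.Equiv y b) : Step r a b :=
  ⟨x, y, ha, ⟨Ctx.hole, x, y, hr, rfl, rfl⟩, hb⟩

theorem Deriv.ofEquiv {r : Rules} {a b : Str} (h : Str.Equiv a b) : Deriv r a b := Or.inl h

theorem Deriv.single {r : Rules} {a b : Str} (h : Step r a b) : Deriv r a b :=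
  Or.inr (Relation.TransGen.single h)

theorem Step.equiv_left {r : Rules} {a a' b : Str} (h : Step r a b) (ha : Str.Equiv a' a) :
    Step r a' b := h.equiv ha (Str.Equiv.refl b)

theorem Deriv.trans {r : Rules} {a b c : Str} (h1 : Deriv r a b) (h2 : Deriv r b c) :
    Deriv r a c := by
  rcases h1 with h1 | h1 <;> rcases h2 with h2 | h2
  · exact Or.inl (h1.trans h2)
  · refine Or.inr ?_
    induction h2 with
    | single h => exact Relation.TransGen.single (h.equiv_left h1)
    | tail _ h ih => exact Relation.TransGen.tail ih h
  · refine Or.inr ?_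
    cases h1 with
    | single h => exact Relation.TransGen.single (h.equiv (Str.Equiv.refl _) h2)
    | tail t h => exact Relation.TransGen.tail t (h.equiv (Str.Equiv.refl _) h2)
  · exact Or.inr (h1.trans h2)

theorem Deriv.equiv {r : Rules} {a b a' b' : Str} (h : Deriv r a b)
    (ha : Str.Equiv a' a) (hb : Str.Equiv b b') : Deriv r a' b' :=
  ((Deriv.ofEquiv ha).trans h).trans (Deriv.ofEquiv hb)

theorem Deriv.fill {r : Rules} (C : Ctx) {a b : Str} (h : Deriv r a b) :
    Deriv r (C.fill a) (C.fill b) := by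
  rcases h with h | h
  · exact Or.inl (Ctx.fill_congr_s5 C h)
  · refine Or.inr ?_
    induction h with
    | single h => exact Relation.TransGen.single (h.fill C)
    | tail _ h ih => exact Relation.TransGen.tail ih (h.fill C)

theorem Deriv.cons {r : Rules} {a b c : Str} (h : Step r a b) (h2 : Deriv r b c) :
    Deriv r a c := (Deriv.single h).trans h2

-- swq inclusions
theorem swq_sw {a b : Str} (h : sw a b) : swq a b := Or.inl (Or.inl h)
theorem swq_qDown {a b : Str} (h : qDown a b) : swq a b := Or.inl (Or.inr h)
theorem swq_qUp {a b : Str} (h : qUp a b) : swq a b := Or.inr h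

-- ===================== Counting invariant =====================
namespace Str

/-- Number of atoms and modality nodes; `cnt a = 0` iff `a ≡ ∘`. -/
def cnt : Str → ℕ
  | atom _ _ => 1
  | unit => 0
  | par a b => cnt a + cnt b
  | ten a b => cnt a + cnt b
  | seq a b => cnt a + cnt b
  | quest a => cnt a + 1
  | bang a => cnt a + 1

theorem Equiv.cnt_eq {a b : Str} (h : Equiv a b) : cnt a = cnt b := by
  induction h <;> simp [cnt, *] <;> omega

theorem equiv_unit_of_cnt : ∀ {a : Str}, cnt a = 0 → Equiv a unit := by
  intro a
  induction a with
  | atom n b => intro h; simp [cnt] at h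
  | unit => intro _; exact Equiv.refl unit
  | par a b iha ihb =>
    intro h
    simp [cnt] at h
    exact ((Equiv.parCongr (iha h.1) (ihb h.2)).trans (Equiv.parUnit unit))
  | ten a b iha ihb =>
    intro h
    simp [cnt] at h
    exact ((Equiv.tenCongr (iha h.1) (ihb h.2)).trans (Equiv.tenUnit unit))
  | seq a b iha ihb =>
    intro h
    simp [cnt] at h
    exact ((Equiv.seqCongr (iha h.1) (ihb h.2)).trans (Equiv.seqUnitL unit))
  | quest a ih => intro h; simp [cnt] at h
  | bang a ih => intro h; simp [cnt] at h

-- ===================== Single-modality-block invariant =====================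

abbrev Cls := Quotient Str.setoid

/-- Auxiliary binary operation for `sm2`. -/
def obin (m n : ℕ) (x y : Option (Bool × Cls)) : Option (Bool × Cls) :=
  if m = 0 then y else if n = 0 then x else none

/-- If the equivalence class of the structure is a single `?`- or `!`-block,
return its kind and argument class. -/
def sm2 : Str → Option (Bool × Cls)
  | atom _ _ => none
  | unit => none
  | par a b => obin (cnt a) (cnt b) (sm2 a) (sm2 b)
  | ten a b => obin (cnt a) (cnt b) (sm2 a) (sm2 b)
  | seq a b => obin (cnt a) (cnt b) (sm2 a) (sm2 b)
  | quest a => some (false, ⟦a⟧)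
  | bang a => some (true, ⟦a⟧)

theorem sm2_of_cnt_zero : ∀ {a : Str}, cnt a = 0 → sm2 a = none := by
  intro a
  induction a with
  | atom n b => intro _; rfl
  | unit => intro _; rfl
  | par a b iha ihb => intro h; simp [cnt] at h; simp [sm2, obin, h.1, h.2, ihb h.2]
  | ten a b iha ihb => intro h; simp [cnt] at h; simp [sm2, obin, h.1, h.2, ihb h.2]
  | seq a b iha ihb => intro h; simp [cnt] at h; simp [sm2, obin, h.1, h.2, ihb h.2]
  | quest a ih => intro h; simp [cnt] at h
  | bang a ih => intro h; simp [cnt] at h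

theorem obin_assoc {m n k : ℕ} {x y z : Option (Bool × Cls)}
    (hx : m = 0 → x = none) (hz : k = 0 → z = none) :
    obin (m + n) k (obin m n x y) z = obin m (n + k) x (obin n k y z) := by
  unfold obin
  by_cases hm : m = 0 <;> by_cases hn : n = 0 <;> by_cases hk : k = 0 <;>
    simp_all <;> omega

theorem obin_comm {m n : ℕ} {x y : Option (Bool × Cls)}
    (hx : m = 0 → x = none) (hy : n = 0 → y = none) :
    obin m n x y = obin n m y x := by
  unfold obin
  by_cases hm : m = 0 <;> by_cases hn : n = 0 <;> simp_all

theorem Equiv.sm2_eq {a b : Str} (h : Equiv a b) : sm2 a = sm2 b := by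
  induction h with
  | refl a => rfl
  | symm _ ih => exact ih.symm
  | trans _ _ ih1 ih2 => exact ih1.trans ih2
  | parAssoc a b c =>
    simp only [sm2, cnt]
    exact obin_assoc sm2_of_cnt_zero sm2_of_cnt_zero
  | tenAssoc a b c =>
    simp only [sm2, cnt]
    exact obin_assoc sm2_of_cnt_zero sm2_of_cnt_zero
  | seqAssoc a b c =>
    simp only [sm2, cnt]
    exact obin_assoc sm2_of_cnt_zero sm2_of_cnt_zero
  | parComm a b =>
    simp only [sm2]
    exact obin_comm sm2_of_cnt_zero sm2_of_cnt_zero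
  | tenComm a b =>
    simp only [sm2]
    exact obin_comm sm2_of_cnt_zero sm2_of_cnt_zero
  | parUnit a => simp [sm2, cnt, obin]
  | tenUnit a => simp [sm2, cnt, obin]
  | seqUnitL a => simp [sm2, cnt, obin]
  | seqUnitR a =>
    simp only [sm2, cnt, obin]
    by_cases h : cnt a = 0
    · simp [h, (sm2_of_cnt_zero h).symm]
    · simp [h]
  | parCongr h1 h2 ih1 ih2 => simp only [sm2]; rw [h1.cnt_eq, h2.cnt_eq, ih1, ih2]
  | tenCongr h1 h2 ih1 ih2 => simp only [sm2]; rw [h1.cnt_eq, h2.cnt_eq, ih1, ih2]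
  | seqCongr h1 h2 ih1 ih2 => simp only [sm2]; rw [h1.cnt_eq, h2.cnt_eq, ih1, ih2]
  | questCongr h ih =>
    simp only [sm2]
    have hq : (⟦_⟧ : Cls) = ⟦_⟧ := Quotient.sound h
    rw [hq]
  | bangCongr h ih =>
    simp only [sm2]
    have hq : (⟦_⟧ : Cls) = ⟦_⟧ := Quotient.sound h
    rw [hq]

/-- `mApp μ Z` is `?Z` when `μ = false` and `!Z` when `μ = true`. -/
def mApp (μ : Bool) (Z : Str) : Str := cond μ (bang Z) (quest Z)

theorem sm2_mApp (μ : Bool) (Z : Str) : sm2 (mApp μ Z) = some (μ, ⟦Z⟧) := by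
  cases μ <;> rfl

theorem par_mu {X Y Z : Str} {μ : Bool} (h : Equiv (par X Y) (mApp μ Z)) :
    (Equiv X unit ∧ Equiv Y (mApp μ Z)) ∨ (Equiv Y unit ∧ Equiv X (mApp μ Z)) := by
  have hs := h.sm2_eq
  rw [sm2_mApp] at hs
  simp only [sm2, obin] at hs
  by_cases hx : cnt X = 0
  · left
    have hXu := equiv_unit_of_cnt hx
    exact ⟨hXu, ((Equiv.parUnit Y).symm.trans (Equiv.pL hXu.symm)).trans h⟩
  · by_cases hy : cnt Y = 0
    · right
      have hYu := equiv_unit_of_cnt hy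
      exact ⟨hYu, ((Equiv.parUnitR X).symm.trans (Equiv.pR hYu.symm)).trans h⟩
    · simp [hx, hy] at hs

theorem ten_mu {X Y Z : Str} {μ : Bool} (h : Equiv (ten X Y) (mApp μ Z)) :
    (Equiv X unit ∧ Equiv Y (mApp μ Z)) ∨ (Equiv Y unit ∧ Equiv X (mApp μ Z)) := by
  have hs := h.sm2_eq
  rw [sm2_mApp] at hs
  simp only [sm2, obin] at hs
  by_cases hx : cnt X = 0
  · left
    have hXu := equiv_unit_of_cnt hx
    exact ⟨hXu, ((Equiv.tenUnit Y).symm.trans (Equiv.tL hXu.symm)).trans h⟩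
  · by_cases hy : cnt Y = 0
    · right
      have hYu := equiv_unit_of_cnt hy
      exact ⟨hYu, ((Equiv.tenUnitR X).symm.trans (Equiv.tR hYu.symm)).trans h⟩
    · simp [hx, hy] at hs

theorem seq_mu {X Y Z : Str} {μ : Bool} (h : Equiv (seq X Y) (mApp μ Z)) :
    (Equiv X unit ∧ Equiv Y (mApp μ Z)) ∨ (Equiv Y unit ∧ Equiv X (mApp μ Z)) := by
  have hs := h.sm2_eq
  rw [sm2_mApp] at hs
  simp only [sm2, obin] at hs
  by_cases hx : cnt X = 0
  · left
    have hXu := equiv_unit_of_cnt hx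
    exact ⟨hXu, ((Equiv.seqUnitL Y).symm.trans (Equiv.sL hXu.symm)).trans h⟩
  · by_cases hy : cnt Y = 0
    · right
      have hYu := equiv_unit_of_cnt hy
      exact ⟨hYu, ((Equiv.seqUnitR X).symm.trans (Equiv.sR hYu.symm)).trans h⟩
    · simp [hx, hy] at hs

theorem quest_mu {A Z : Str} {μ : Bool} (h : Equiv (quest A) (mApp μ Z)) :
    μ = false ∧ Equiv A Z := by
  have hs := h.sm2_eq
  rw [sm2_mApp] at hs
  simp only [sm2] at hs
  obtain ⟨h1, h2⟩ := Prod.mk.injEq .. ▸ (Option.some.injEq _ _ ▸ hs)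
  exact ⟨h1.symm, Quotient.exact h2⟩

theorem bang_mu {A Z : Str} {μ : Bool} (h : Equiv (bang A) (mApp μ Z)) :
    μ = true ∧ Equiv A Z := by
  have hs := h.sm2_eq
  rw [sm2_mApp] at hs
  simp only [sm2] at hs
  obtain ⟨h1, h2⟩ := Prod.mk.injEq .. ▸ (Option.some.injEq _ _ ▸ hs)
  exact ⟨h1.symm, Quotient.exact h2⟩

end Str

-- ===================== Modality-block replacement =====================
open Str

/-- `MRep W0 W1 X Y`: `Y` is `X` with one modality-rooted subterm equivalent to
`W0` (at a position not under any modality) replaced by `W1`. -/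
inductive MRep (W0 W1 : Str) : Str → Str → Prop
  | baseQ {A} (h : Str.Equiv (quest A) W0) : MRep W0 W1 (quest A) W1
  | baseB {A} (h : Str.Equiv (bang A) W0) : MRep W0 W1 (bang A) W1
  | parL {A A'} (B) (h : MRep W0 W1 A A') : MRep W0 W1 (par A B) (par A' B)
  | parR (A) {B B'} (h : MRep W0 W1 B B') : MRep W0 W1 (par A B) (par A B')
  | tenL {A A'} (B) (h : MRep W0 W1 A A') : MRep W0 W1 (ten A B) (ten A' B)
  | tenR (A) {B B'} (h : MRep W0 W1 B B') : MRep W0 W1 (ten A B) (ten A B')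
  | seqL {A A'} (B) (h : MRep W0 W1 A A') : MRep W0 W1 (seq A B) (seq A' B)
  | seqR (A) {B B'} (h : MRep W0 W1 B B') : MRep W0 W1 (seq A B) (seq A B')

/-- `MRep` is stable under the syntactic equivalence. -/
theorem rep_stab {W0 W1 X Y : Str} (h : Str.Equiv X Y) :
    (∀ P, MRep W0 W1 X P → ∃ Q, MRep W0 W1 Y Q ∧ Str.Equiv P Q) ∧
    (∀ P, MRep W0 W1 Y P → ∃ Q, MRep W0 W1 X Q ∧ Str.Equiv P Q) := by
  induction h with
  | refl a => exact ⟨fun P hP => ⟨P, hP, Str.Equiv.refl P⟩, fun P hP => ⟨P, hP, Str.Equiv.refl P⟩⟩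
  | symm _ ih => exact ⟨ih.2, ih.1⟩
  | trans _ _ ih1 ih2 =>
    constructor
    · intro P hP
      obtain ⟨Q, hQ, e⟩ := ih1.1 P hP
      obtain ⟨R, hR, e'⟩ := ih2.1 Q hQ
      exact ⟨R, hR, e.trans e'⟩
    · intro P hP
      obtain ⟨Q, hQ, e⟩ := ih2.2 P hP
      obtain ⟨R, hR, e'⟩ := ih1.2 Q hQ
      exact ⟨R, hR, e.trans e'⟩
  | parAssoc a b c =>
    constructor
    · intro P hP
      cases hP with
      | parL _ h' =>
        cases h' with
        | parL _ h'' => exact ⟨_, MRep.parL _ h'', Str.Equiv.parAssoc _ _ _⟩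
        | parR _ h'' => exact ⟨_, MRep.parR _ (MRep.parL _ h''), Str.Equiv.parAssoc _ _ _⟩
      | parR _ h' => exact ⟨_, MRep.parR _ (MRep.parR _ h'), Str.Equiv.parAssoc _ _ _⟩
    · intro P hP
      cases hP with
      | parL _ h' => exact ⟨_, MRep.parL _ (MRep.parL _ h'), (Str.Equiv.parAssoc _ _ _).symm⟩
      | parR _ h' =>
        cases h' with
        | parL _ h'' => exact ⟨_, MRep.parL _ (MRep.parR _ h''), (Str.Equiv.parAssoc _ _ _).symm⟩
        | parR _ h'' => exact ⟨_, MRep.parR _ h'', (Str.Equiv.parAssoc _ _ _).symm⟩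
  | tenAssoc a b c =>
    constructor
    · intro P hP
      cases hP with
      | tenL _ h' =>
        cases h' with
        | tenL _ h'' => exact ⟨_, MRep.tenL _ h'', Str.Equiv.tenAssoc _ _ _⟩
        | tenR _ h'' => exact ⟨_, MRep.tenR _ (MRep.tenL _ h''), Str.Equiv.tenAssoc _ _ _⟩
      | tenR _ h' => exact ⟨_, MRep.tenR _ (MRep.tenR _ h'), Str.Equiv.tenAssoc _ _ _⟩
    · intro P hP
      cases hP with
      | tenL _ h' => exact ⟨_, MRep.tenL _ (MRep.tenL _ h'), (Str.Equiv.tenAssoc _ _ _).symm⟩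
      | tenR _ h' =>
        cases h' with
        | tenL _ h'' => exact ⟨_, MRep.tenL _ (MRep.tenR _ h''), (Str.Equiv.tenAssoc _ _ _).symm⟩
        | tenR _ h'' => exact ⟨_, MRep.tenR _ h'', (Str.Equiv.tenAssoc _ _ _).symm⟩
  | seqAssoc a b c =>
    constructor
    · intro P hP
      cases hP with
      | seqL _ h' =>
        cases h' with
        | seqL _ h'' => exact ⟨_, MRep.seqL _ h'', Str.Equiv.seqAssoc _ _ _⟩
        | seqR _ h'' => exact ⟨_, MRep.seqR _ (MRep.seqL _ h''), Str.Equiv.seqAssoc _ _ _⟩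
      | seqR _ h' => exact ⟨_, MRep.seqR _ (MRep.seqR _ h'), Str.Equiv.seqAssoc _ _ _⟩
    · intro P hP
      cases hP with
      | seqL _ h' => exact ⟨_, MRep.seqL _ (MRep.seqL _ h'), (Str.Equiv.seqAssoc _ _ _).symm⟩
      | seqR _ h' =>
        cases h' with
        | seqL _ h'' => exact ⟨_, MRep.seqL _ (MRep.seqR _ h''), (Str.Equiv.seqAssoc _ _ _).symm⟩
        | seqR _ h'' => exact ⟨_, MRep.seqR _ h'', (Str.Equiv.seqAssoc _ _ _).symm⟩
  | parComm a b =>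
    constructor
    · intro P hP
      cases hP with
      | parL _ h' => exact ⟨_, MRep.parR _ h', Str.Equiv.parComm _ _⟩
      | parR _ h' => exact ⟨_, MRep.parL _ h', Str.Equiv.parComm _ _⟩
    · intro P hP
      cases hP with
      | parL _ h' => exact ⟨_, MRep.parR _ h', Str.Equiv.parComm _ _⟩
      | parR _ h' => exact ⟨_, MRep.parL _ h', Str.Equiv.parComm _ _⟩
  | tenComm a b =>
    constructor
    · intro P hP
      cases hP with
      | tenL _ h' => exact ⟨_, MRep.tenR _ h', Str.Equiv.tenComm _ _⟩
      | tenR _ h' => exact ⟨_, MRep.tenL _ h', Str.Equiv.tenComm _ _⟩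
    · intro P hP
      cases hP with
      | tenL _ h' => exact ⟨_, MRep.tenR _ h', Str.Equiv.tenComm _ _⟩
      | tenR _ h' => exact ⟨_, MRep.tenL _ h', Str.Equiv.tenComm _ _⟩
  | parUnit a =>
    constructor
    · intro P hP
      cases hP with
      | parL _ h' => cases h'
      | parR _ h' => exact ⟨_, h', Str.Equiv.parUnit _⟩
    · intro P hP
      exact ⟨_, MRep.parR _ hP, (Str.Equiv.parUnit _).symm⟩
  | tenUnit a =>
    constructor
    · intro P hP
      cases hP with
      | tenL _ h' => cases h'
      | tenR _ h' => exact ⟨_, h', Str.Equiv.tenUnit _⟩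
    · intro P hP
      exact ⟨_, MRep.tenR _ hP, (Str.Equiv.tenUnit _).symm⟩
  | seqUnitL a =>
    constructor
    · intro P hP
      cases hP with
      | seqL _ h' => cases h'
      | seqR _ h' => exact ⟨_, h', Str.Equiv.seqUnitL _⟩
    · intro P hP
      exact ⟨_, MRep.seqR _ hP, (Str.Equiv.seqUnitL _).symm⟩
  | seqUnitR a =>
    constructor
    · intro P hP
      cases hP with
      | seqR _ h' => cases h'
      | seqL _ h' => exact ⟨_, h', Str.Equiv.seqUnitR _⟩
    · intro P hP
      exact ⟨_, MRep.seqL _ hP, (Str.Equiv.seqUnitR _).symm⟩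
  | parCongr h1 h2 ih1 ih2 =>
    constructor
    · intro P hP
      cases hP with
      | parL _ h' =>
        obtain ⟨Q, hQ, e⟩ := ih1.1 _ h'
        exact ⟨_, MRep.parL _ hQ, Str.Equiv.parCongr e h2⟩
      | parR _ h' =>
        obtain ⟨Q, hQ, e⟩ := ih2.1 _ h'
        exact ⟨_, MRep.parR _ hQ, Str.Equiv.parCongr h1 e⟩
    · intro P hP
      cases hP with
      | parL _ h' =>
        obtain ⟨Q, hQ, e⟩ := ih1.2 _ h'
        exact ⟨_, MRep.parL _ hQ, Str.Equiv.parCongr e h2.symm⟩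
      | parR _ h' =>
        obtain ⟨Q, hQ, e⟩ := ih2.2 _ h'
        exact ⟨_, MRep.parR _ hQ, Str.Equiv.parCongr h1.symm e⟩
  | tenCongr h1 h2 ih1 ih2 =>
    constructor
    · intro P hP
      cases hP with
      | tenL _ h' =>
        obtain ⟨Q, hQ, e⟩ := ih1.1 _ h'
        exact ⟨_, MRep.tenL _ hQ, Str.Equiv.tenCongr e h2⟩
      | tenR _ h' =>
        obtain ⟨Q, hQ, e⟩ := ih2.1 _ h'
        exact ⟨_, MRep.tenR _ hQ, Str.Equiv.tenCongr h1 e⟩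
    · intro P hP
      cases hP with
      | tenL _ h' =>
        obtain ⟨Q, hQ, e⟩ := ih1.2 _ h'
        exact ⟨_, MRep.tenL _ hQ, Str.Equiv.tenCongr e h2.symm⟩
      | tenR _ h' =>
        obtain ⟨Q, hQ, e⟩ := ih2.2 _ h'
        exact ⟨_, MRep.tenR _ hQ, Str.Equiv.tenCongr h1.symm e⟩
  | seqCongr h1 h2 ih1 ih2 =>
    constructor
    · intro P hP
      cases hP with
      | seqL _ h' =>
        obtain ⟨Q, hQ, e⟩ := ih1.1 _ h'
        exact ⟨_, MRep.seqL _ hQ, Str.Equiv.seqCongr e h2⟩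
      | seqR _ h' =>
        obtain ⟨Q, hQ, e⟩ := ih2.1 _ h'
        exact ⟨_, MRep.seqR _ hQ, Str.Equiv.seqCongr h1 e⟩
    · intro P hP
      cases hP with
      | seqL _ h' =>
        obtain ⟨Q, hQ, e⟩ := ih1.2 _ h'
        exact ⟨_, MRep.seqL _ hQ, Str.Equiv.seqCongr e h2.symm⟩
      | seqR _ h' =>
        obtain ⟨Q, hQ, e⟩ := ih2.2 _ h'
        exact ⟨_, MRep.seqR _ hQ, Str.Equiv.seqCongr h1.symm e⟩
  | questCongr h ih =>
    constructor
    · intro P hP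
      cases hP with
      | baseQ h' =>
        exact ⟨_, MRep.baseQ ((Str.Equiv.questCongr h).symm.trans h'), Str.Equiv.refl _⟩
    · intro P hP
      cases hP with
      | baseQ h' =>
        exact ⟨_, MRep.baseQ ((Str.Equiv.questCongr h).trans h'), Str.Equiv.refl _⟩
  | bangCongr h ih =>
    constructor
    · intro P hP
      cases hP with
      | baseB h' =>
        exact ⟨_, MRep.baseB ((Str.Equiv.bangCongr h).symm.trans h'), Str.Equiv.refl _⟩
    · intro P hP
      cases hP with
      | baseB h' =>
        exact ⟨_, MRep.baseB ((Str.Equiv.bangCongr h).trans h'), Str.Equiv.refl _⟩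

/-- Transport a replacement along an equivalence. -/
theorem MRep.transport {W0 W1 X Y P : Str} (h : Str.Equiv X Y) (hP : MRep W0 W1 X P) :
    ∃ Q, MRep W0 W1 Y Q ∧ Str.Equiv P Q := (rep_stab h).1 P hP

/-- Modality context. -/
def mCtx (μ : Bool) (D : Ctx) : Ctx := cond μ (Ctx.bang D) (Ctx.quest D)

theorem mCtx_fill (μ : Bool) (D : Ctx) (x : Str) :
    (mCtx μ D).fill x = mApp μ (D.fill x) := by cases μ <;> rfl

/-- A replacement of an e↓-redex pair is realized by a context. -/
theorem rep_edown {μ : Bool} {D : Ctx} {X Y : Str}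
    (h : MRep (mApp μ (D.fill unit)) (mApp μ (D.fill (bang unit))) X Y) :
    ∃ C : Ctx, Str.Equiv X (C.fill unit) ∧ Str.Equiv Y (C.fill (bang unit)) := by
  induction h with
  | baseQ h =>
    exact ⟨mCtx μ D, by rw [mCtx_fill]; exact h, by rw [mCtx_fill]⟩
  | baseB h =>
    exact ⟨mCtx μ D, by rw [mCtx_fill]; exact h, by rw [mCtx_fill]⟩
  | parL B h ih => obtain ⟨C, h1, h2⟩ := ih; exact ⟨Ctx.parL C B, h1.pL, h2.pL⟩
  | parR A h ih => obtain ⟨C, h1, h2⟩ := ih; exact ⟨Ctx.parR A C, h1.pR, h2.pR⟩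
  | tenL B h ih => obtain ⟨C, h1, h2⟩ := ih; exact ⟨Ctx.tenL C B, h1.tL, h2.tL⟩
  | tenR A h ih => obtain ⟨C, h1, h2⟩ := ih; exact ⟨Ctx.tenR A C, h1.tR, h2.tR⟩
  | seqL B h ih => obtain ⟨C, h1, h2⟩ := ih; exact ⟨Ctx.seqL C B, h1.sL, h2.sL⟩
  | seqR A h ih => obtain ⟨C, h1, h2⟩ := ih; exact ⟨Ctx.seqR A C, h1.sR, h2.sR⟩

-- ===================== Free-path contexts =====================

/-- The hole of the context is not under any modality. -/
def freePath : Ctx → Prop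
  | Ctx.hole => True
  | Ctx.parL C _ => freePath C
  | Ctx.parR _ C => freePath C
  | Ctx.tenL C _ => freePath C
  | Ctx.tenR _ C => freePath C
  | Ctx.seqL C _ => freePath C
  | Ctx.seqR _ C => freePath C
  | Ctx.quest _ => False
  | Ctx.bang _ => False

/-- Every context is either modality-free, or decomposes as a modality-free part
followed by a modality. -/
theorem ctx_decomp : ∀ C : Ctx, freePath C ∨
    ∃ (K : Ctx) (μ : Bool) (D : Ctx), C = K.comp_s5 (mCtx μ D) ∧ freePath K := by
  intro C
  induction C with
  | hole => exact Or.inl trivial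
  | parL C T ih =>
    rcases ih with h | ⟨K, μ, D, hE, hK⟩
    · exact Or.inl h
    · exact Or.inr ⟨Ctx.parL K T, μ, D, by simp [Ctx.comp_s5, hE], hK⟩
  | parR T C ih =>
    rcases ih with h | ⟨K, μ, D, hE, hK⟩
    · exact Or.inl h
    · exact Or.inr ⟨Ctx.parR T K, μ, D, by simp [Ctx.comp_s5, hE], hK⟩
  | tenL C T ih =>
    rcases ih with h | ⟨K, μ, D, hE, hK⟩
    · exact Or.inl h
    · exact Or.inr ⟨Ctx.tenL K T, μ, D, by simp [Ctx.comp_s5, hE], hK⟩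
  | tenR T C ih =>
    rcases ih with h | ⟨K, μ, D, hE, hK⟩
    · exact Or.inl h
    · exact Or.inr ⟨Ctx.tenR T K, μ, D, by simp [Ctx.comp_s5, hE], hK⟩
  | seqL C T ih =>
    rcases ih with h | ⟨K, μ, D, hE, hK⟩
    · exact Or.inl h
    · exact Or.inr ⟨Ctx.seqL K T, μ, D, by simp [Ctx.comp_s5, hE], hK⟩
  | seqR T C ih =>
    rcases ih with h | ⟨K, μ, D, hE, hK⟩
    · exact Or.inl h
    · exact Or.inr ⟨Ctx.seqR T K, μ, D, by simp [Ctx.comp_s5, hE], hK⟩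
  | quest C _ => exact Or.inr ⟨Ctx.hole, false, C, rfl, trivial⟩
  | bang C _ => exact Or.inr ⟨Ctx.hole, true, C, rfl, trivial⟩

/-- The canonical replacement at a free-path position. -/
theorem rep_self {μ : Bool} {D : Ctx} : ∀ (K : Ctx), freePath K →
    MRep (mApp μ (D.fill unit)) (mApp μ (D.fill (bang unit)))
      (K.fill (mApp μ (D.fill unit))) (K.fill (mApp μ (D.fill (bang unit)))) := by
  intro K
  induction K with
  | hole =>
    intro _
    cases μ
    · exact MRep.baseQ (Str.Equiv.refl _)
    · exact MRep.baseB (Str.Equiv.refl _)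
  | parL C T ih => exact fun h => MRep.parL _ (ih h)
  | parR T C ih => exact fun h => MRep.parR _ (ih h)
  | tenL C T ih => exact fun h => MRep.tenL _ (ih h)
  | tenR T C ih => exact fun h => MRep.tenR _ (ih h)
  | seqL C T ih => exact fun h => MRep.seqL _ (ih h)
  | seqR T C ih => exact fun h => MRep.seqR _ (ih h)
  | quest C ih => exact fun h => absurd h id
  | bang C ih => exact fun h => absurd h id

-- ===================== Conversion steps and the master push lemma =====================
section Master
open Str

/-- ⅋-attachment to ◁-attachment (degenerate q↓). -/
theorem convPS (X : Str) : Step swq (par X (bang unit)) (seq X (bang unit)) :=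
  Step.mk' (swq_qDown (qDown.mk X unit unit (bang unit)))
    (Str.Equiv.parCongr (Str.Equiv.seqUnitR X).symm (Str.Equiv.seqUnitL (bang unit)).symm)
    (Str.Equiv.seqCongr (Str.Equiv.parUnitR X) (Str.Equiv.parUnit (bang unit)))

/-- ◁-attachment to ⊗-attachment (degenerate q↑). -/
theorem convST (X : Str) : Step swq (seq X (bang unit)) (ten X (bang unit)) :=
  Step.mk' (swq_qUp (qUp.mk X unit unit (bang unit)))
    (Str.Equiv.seqCongr (Str.Equiv.tenUnitR X).symm (Str.Equiv.tenUnit (bang unit)).symm)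
    (Str.Equiv.tenCongr (Str.Equiv.seqUnitR X) (Str.Equiv.seqUnitL (bang unit)))

/-- ⊗-attachment to ⅋-attachment (mix: degenerate switch). -/
theorem convTP (X : Str) : Step swq (ten X (bang unit)) (par X (bang unit)) :=
  Step.mk' (swq_sw (sw.mk unit X (bang unit)))
    ((Str.Equiv.tL (Str.Equiv.parUnit X).symm))
    ((Str.Equiv.pL (Str.Equiv.tenUnit (bang unit))).trans (Str.Equiv.parComm _ X))

/-- Push a ⅋-attachment into the left component of a seq. -/
theorem pushSeqL (A C : Str) :
    Step swq (par (seq A C) (bang unit)) (seq (par A (bang unit)) C) :=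
  Step.mk' (swq_qDown (qDown.mk A C (bang unit) unit))
    (Str.Equiv.pR (Str.Equiv.seqUnitR (bang unit)).symm)
    (Str.Equiv.sR (Str.Equiv.parUnitR C))

/-- Push a ⅋-attachment into the right component of a seq. -/
theorem pushSeqR (A C : Str) :
    Step swq (par (seq A C) (bang unit)) (seq A (par C (bang unit))) :=
  Step.mk' (swq_qDown (qDown.mk A C unit (bang unit)))
    (Str.Equiv.pR (Str.Equiv.seqUnitL (bang unit)).symm)
    (Str.Equiv.sL (Str.Equiv.parUnitR A))

/-- Push a ◁-attachment into the left factor of a tensor (q↑). -/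
theorem pushTenStep (X T : Str) :
    Step swq (seq (ten X T) (bang unit)) (ten (seq X (bang unit)) T) :=
  Step.mk' (swq_qUp (qUp.mk X T (bang unit) unit))
    (Str.Equiv.sR (Str.Equiv.tenUnitR (bang unit)).symm)
    (Str.Equiv.tR (Str.Equiv.seqUnitR T))

theorem pushTenLemma (X T : Str) :
    Deriv swq (par (ten X T) (bang unit)) (ten (par X (bang unit)) T) :=
  Deriv.cons (convPS _) (Deriv.cons (pushTenStep X T)
    (Deriv.fill (Ctx.tenL Ctx.hole T)
      ((Deriv.single (convST X)).trans (Deriv.single (convTP X)))))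

/-- **Master push lemma**: a top-level ⅋-attached `!∘` can be brought to any
modality-free position. -/
theorem master : ∀ (C : Ctx), freePath C →
    Deriv swq (par (C.fill unit) (bang unit)) (C.fill (bang unit)) := by
  intro C
  induction C with
  | hole => exact fun _ => Deriv.ofEquiv (Str.Equiv.parUnit _)
  | parL C' T ih =>
    intro h
    refine (Deriv.fill (Ctx.parL Ctx.hole T) (ih h)).equiv ?_ (Str.Equiv.refl _)
    -- (X ⅋ T) ⅋ !∘ ≡ (X ⅋ !∘) ⅋ T
    exact (Str.Equiv.parAssoc _ _ _).trans
      ((Str.Equiv.pR (Str.Equiv.parComm T _)).trans (Str.Equiv.parAssoc _ _ _).symm)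
  | parR T C' ih =>
    intro h
    refine (Deriv.fill (Ctx.parR T Ctx.hole) (ih h)).equiv ?_ (Str.Equiv.refl _)
    -- (T ⅋ X) ⅋ !∘ ≡ T ⅋ (X ⅋ !∘)
    exact Str.Equiv.parAssoc _ _ _
  | tenL C' T ih =>
    intro h
    exact ((pushTenLemma (C'.fill unit) T).trans
      (Deriv.fill (Ctx.tenL Ctx.hole T) (ih h)))
  | tenR T C' ih =>
    intro h
    refine (((pushTenLemma (C'.fill unit) T).trans
      (Deriv.fill (Ctx.tenL Ctx.hole T) (ih h)))).equiv
      (Str.Equiv.pL (Str.Equiv.tenComm T (C'.fill unit)))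
      (Str.Equiv.tenComm (C'.fill (bang unit)) T)
  | seqL C' T ih =>
    intro h
    exact Deriv.cons (pushSeqL _ T) (Deriv.fill (Ctx.seqL Ctx.hole T) (ih h))
  | seqR T C' ih =>
    intro h
    exact Deriv.cons (pushSeqR T _) (Deriv.fill (Ctx.seqR T Ctx.hole) (ih h))
  | quest C' ih => exact fun h => absurd h id
  | bang C' ih => exact fun h => absurd h id

end Master

-- ===================== The localization lemma =====================
section Locate
open Str

/-- Solution of the permutation problem for premise `X` and target `Y`. -/
def SOL (r : Rules) (X Y : Str) : Prop :=
  ∃ V W, Step eDown X V ∧ Step r V W ∧ Deriv swq W Y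

theorem step_eDown_ctx (C : Ctx) {X V : Str} (h1 : Str.Equiv X (C.fill unit))
    (h2 : Str.Equiv (C.fill (bang unit)) V) : Step eDown X V :=
  ⟨C.fill unit, C.fill (bang unit), h1, ⟨C, unit, bang unit, eDown.mk, rfl, rfl⟩, h2⟩

theorem step_rule_ctx {r : Rules} {a b : Str} (C : Ctx) (hr : r a b) {X Y : Str}
    (h1 : Str.Equiv X (C.fill a)) (h2 : Str.Equiv (C.fill b) Y) : Step r X Y :=
  ⟨C.fill a, C.fill b, h1, ⟨C, a, b, hr, rfl, rfl⟩, h2⟩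

theorem SOL.equiv {r : Rules} {X Y X' Y' : Str} (h : SOL r X Y)
    (hX : Str.Equiv X' X) (hY : Str.Equiv Y Y') : SOL r X' Y' := by
  obtain ⟨V, W, h1, h2, h3⟩ := h
  exact ⟨V, W, h1.equiv hX (Str.Equiv.refl _), h2, h3.trans (Deriv.ofEquiv hY)⟩

/-- `locate`: reduce the under-modality case to the redex itself. -/
theorem locate {r : Rules} {a b : Str} (hr : r a b)
    (hook : ∀ (μ : Bool) (D : Ctx) (P' : Str),
      MRep (mApp μ (D.fill unit)) (mApp μ (D.fill (bang unit))) b P' → SOL r a P') :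
    ∀ (S : Ctx) (μ : Bool) (D : Ctx) (P' : Str),
      MRep (mApp μ (D.fill unit)) (mApp μ (D.fill (bang unit))) (S.fill b) P' →
      SOL r (S.fill a) P' := by
  intro S
  induction S with
  | hole => exact hook
  | parL S₁ t ih =>
    intro μ D P' hP
    cases hP with
    | parL _ h' =>
      obtain ⟨V, W, h1, h2, h3⟩ := ih μ D _ h'
      exact ⟨par V t, par W t, h1.fill (Ctx.parL Ctx.hole t), h2.fill (Ctx.parL Ctx.hole t),
        h3.fill (Ctx.parL Ctx.hole t)⟩
    | parR _ h' =>
      obtain ⟨C', e1, e2⟩ := rep_edown h'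
      refine ⟨par (S₁.fill a) (C'.fill (bang unit)), par (S₁.fill b) (C'.fill (bang unit)),
        ?_, ?_, ?_⟩
      · exact step_eDown_ctx (Ctx.parR (S₁.fill a) C') (Str.Equiv.pR e1) (Str.Equiv.refl _)
      · exact step_rule_ctx (Ctx.parL S₁ (C'.fill (bang unit))) hr
          (Str.Equiv.refl _) (Str.Equiv.refl _)
      · exact Deriv.ofEquiv (Str.Equiv.pR e2.symm)
  | parR t S₁ ih =>
    intro μ D P' hP
    cases hP with
    | parR _ h' =>
      obtain ⟨V, W, h1, h2, h3⟩ := ih μ D _ h'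
      exact ⟨par t V, par t W, h1.fill (Ctx.parR t Ctx.hole), h2.fill (Ctx.parR t Ctx.hole),
        h3.fill (Ctx.parR t Ctx.hole)⟩
    | parL _ h' =>
      obtain ⟨C', e1, e2⟩ := rep_edown h'
      refine ⟨par (C'.fill (bang unit)) (S₁.fill a), par (C'.fill (bang unit)) (S₁.fill b),
        ?_, ?_, ?_⟩
      · exact step_eDown_ctx (Ctx.parL C' (S₁.fill a)) (Str.Equiv.pL e1) (Str.Equiv.refl _)
      · exact step_rule_ctx (Ctx.parR (C'.fill (bang unit)) S₁) hr
          (Str.Equiv.refl _) (Str.Equiv.refl _)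
      · exact Deriv.ofEquiv (Str.Equiv.pL e2.symm)
  | tenL S₁ t ih =>
    intro μ D P' hP
    cases hP with
    | tenL _ h' =>
      obtain ⟨V, W, h1, h2, h3⟩ := ih μ D _ h'
      exact ⟨ten V t, ten W t, h1.fill (Ctx.tenL Ctx.hole t), h2.fill (Ctx.tenL Ctx.hole t),
        h3.fill (Ctx.tenL Ctx.hole t)⟩
    | tenR _ h' =>
      obtain ⟨C', e1, e2⟩ := rep_edown h'
      refine ⟨ten (S₁.fill a) (C'.fill (bang unit)), ten (S₁.fill b) (C'.fill (bang unit)),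
        ?_, ?_, ?_⟩
      · exact step_eDown_ctx (Ctx.tenR (S₁.fill a) C') (Str.Equiv.tR e1) (Str.Equiv.refl _)
      · exact step_rule_ctx (Ctx.tenL S₁ (C'.fill (bang unit))) hr
          (Str.Equiv.refl _) (Str.Equiv.refl _)
      · exact Deriv.ofEquiv (Str.Equiv.tR e2.symm)
  | tenR t S₁ ih =>
    intro μ D P' hP
    cases hP with
    | tenR _ h' =>
      obtain ⟨V, W, h1, h2, h3⟩ := ih μ D _ h'
      exact ⟨ten t V, ten t W, h1.fill (Ctx.tenR t Ctx.hole), h2.fill (Ctx.tenR t Ctx.hole),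
        h3.fill (Ctx.tenR t Ctx.hole)⟩
    | tenL _ h' =>
      obtain ⟨C', e1, e2⟩ := rep_edown h'
      refine ⟨ten (C'.fill (bang unit)) (S₁.fill a), ten (C'.fill (bang unit)) (S₁.fill b),
        ?_, ?_, ?_⟩
      · exact step_eDown_ctx (Ctx.tenL C' (S₁.fill a)) (Str.Equiv.tL e1) (Str.Equiv.refl _)
      · exact step_rule_ctx (Ctx.tenR (C'.fill (bang unit)) S₁) hr
          (Str.Equiv.refl _) (Str.Equiv.refl _)
      · exact Deriv.ofEquiv (Str.Equiv.tL e2.symm)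
  | seqL S₁ t ih =>
    intro μ D P' hP
    cases hP with
    | seqL _ h' =>
      obtain ⟨V, W, h1, h2, h3⟩ := ih μ D _ h'
      exact ⟨seq V t, seq W t, h1.fill (Ctx.seqL Ctx.hole t), h2.fill (Ctx.seqL Ctx.hole t),
        h3.fill (Ctx.seqL Ctx.hole t)⟩
    | seqR _ h' =>
      obtain ⟨C', e1, e2⟩ := rep_edown h'
      refine ⟨seq (S₁.fill a) (C'.fill (bang unit)), seq (S₁.fill b) (C'.fill (bang unit)),
        ?_, ?_, ?_⟩
      · exact step_eDown_ctx (Ctx.seqR (S₁.fill a) C') (Str.Equiv.sR e1) (Str.Equiv.refl _)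
      · exact step_rule_ctx (Ctx.seqL S₁ (C'.fill (bang unit))) hr
          (Str.Equiv.refl _) (Str.Equiv.refl _)
      · exact Deriv.ofEquiv (Str.Equiv.sR e2.symm)
  | seqR t S₁ ih =>
    intro μ D P' hP
    cases hP with
    | seqR _ h' =>
      obtain ⟨V, W, h1, h2, h3⟩ := ih μ D _ h'
      exact ⟨seq t V, seq t W, h1.fill (Ctx.seqR t Ctx.hole), h2.fill (Ctx.seqR t Ctx.hole),
        h3.fill (Ctx.seqR t Ctx.hole)⟩
    | seqL _ h' =>
      obtain ⟨C', e1, e2⟩ := rep_edown h'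
      refine ⟨seq (C'.fill (bang unit)) (S₁.fill a), seq (C'.fill (bang unit)) (S₁.fill b),
        ?_, ?_, ?_⟩
      · exact step_eDown_ctx (Ctx.seqL C' (S₁.fill a)) (Str.Equiv.sL e1) (Str.Equiv.refl _)
      · exact step_rule_ctx (Ctx.seqR (C'.fill (bang unit)) S₁) hr
          (Str.Equiv.refl _) (Str.Equiv.refl _)
      · exact Deriv.ofEquiv (Str.Equiv.sL e2.symm)
  | quest S₁ ih =>
    intro μ D P' hP
    cases hP with
    | baseQ h =>
      obtain ⟨hμ, hinner⟩ := quest_mu h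
      subst hμ
      rcases ctx_decomp D with hD | ⟨K, μ₂, D₂, hDe, hK⟩
      · refine ⟨quest (par (S₁.fill a) (bang unit)), quest (par (S₁.fill b) (bang unit)),
          ?_, ?_, ?_⟩
        · exact step_eDown_ctx (Ctx.quest (Ctx.parR (S₁.fill a) Ctx.hole))
            (Str.Equiv.questCongr (Str.Equiv.parUnitR _).symm) (Str.Equiv.refl _)
        · exact step_rule_ctx (Ctx.quest (Ctx.parL S₁ (bang unit))) hr
            (Str.Equiv.refl _) (Str.Equiv.refl _)
        · exact Deriv.fill (Ctx.quest Ctx.hole)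
            ((master D hD).equiv (Str.Equiv.pL hinner) (Str.Equiv.refl _))
      · have hinner' : Str.Equiv (Ctx.fill K (mApp μ₂ (D₂.fill unit))) (S₁.fill b) := by
          rw [hDe, Ctx.fill_comp_s5, mCtx_fill] at hinner
          exact hinner.symm
        obtain ⟨P₂, hP₂, e₂⟩ := (rep_self K hK).transport hinner'
        obtain ⟨V, W, h1, h2, h3⟩ := ih μ₂ D₂ P₂ hP₂
        refine ⟨quest V, quest W, h1.fill (Ctx.quest Ctx.hole), h2.fill (Ctx.quest Ctx.hole), ?_⟩
        refine (h3.fill (Ctx.quest Ctx.hole)).trans (Deriv.ofEquiv ?_)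
        have : (mApp false (D.fill (bang unit))) = quest (K.fill (mApp μ₂ (D₂.fill (bang unit)))) := by
          rw [hDe, Ctx.fill_comp_s5, mCtx_fill]; rfl
        rw [this]
        exact Str.Equiv.questCongr e₂.symm
  | bang S₁ ih =>
    intro μ D P' hP
    cases hP with
    | baseB h =>
      obtain ⟨hμ, hinner⟩ := bang_mu h
      subst hμ
      rcases ctx_decomp D with hD | ⟨K, μ₂, D₂, hDe, hK⟩
      · refine ⟨bang (par (S₁.fill a) (bang unit)), bang (par (S₁.fill b) (bang unit)),
          ?_, ?_, ?_⟩
        · exact step_eDown_ctx (Ctx.bang (Ctx.parR (S₁.fill a) Ctx.hole))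
            (Str.Equiv.bangCongr (Str.Equiv.parUnitR _).symm) (Str.Equiv.refl _)
        · exact step_rule_ctx (Ctx.bang (Ctx.parL S₁ (bang unit))) hr
            (Str.Equiv.refl _) (Str.Equiv.refl _)
        · exact Deriv.fill (Ctx.bang Ctx.hole)
            ((master D hD).equiv (Str.Equiv.pL hinner) (Str.Equiv.refl _))
      · have hinner' : Str.Equiv (Ctx.fill K (mApp μ₂ (D₂.fill unit))) (S₁.fill b) := by
          rw [hDe, Ctx.fill_comp_s5, mCtx_fill] at hinner
          exact hinner.symm
        obtain ⟨P₂, hP₂, e₂⟩ := (rep_self K hK).transport hinner'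
        obtain ⟨V, W, h1, h2, h3⟩ := ih μ₂ D₂ P₂ hP₂
        refine ⟨bang V, bang W, h1.fill (Ctx.bang Ctx.hole), h2.fill (Ctx.bang Ctx.hole), ?_⟩
        refine (h3.fill (Ctx.bang Ctx.hole)).trans (Deriv.ofEquiv ?_)
        have : (mApp true (D.fill (bang unit))) = bang (K.fill (mApp μ₂ (D₂.fill (bang unit)))) := by
          rw [hDe, Ctx.fill_comp_s5, mCtx_fill]; rfl
        rw [this]
        exact Str.Equiv.bangCongr e₂.symm

end Locate

-- ===================== Main assembly =====================
section MainAssembly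
open Str

theorem main_generic {r : Rules}
    (hook : ∀ (a b : Str), r a b → ∀ (μ : Bool) (D : Ctx) (P' : Str),
      MRep (mApp μ (D.fill unit)) (mApp μ (D.fill (bang unit))) b P' → SOL r a P') :
    ∀ Q U P : Str, Step r Q U → Step eDown U P →
      ∃ V W : Str, Step eDown Q V ∧ Step r V W ∧ Deriv swq W P := by
  intro Q U P hQU hUP
  obtain ⟨U', P'', hU, ⟨C, x, y, hxy, hx, hy⟩, hPp⟩ := hUP
  cases hxy
  subst hx hy
  rcases ctx_decomp C with hC | ⟨K, μ, D, hCe, hK⟩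
  · -- Case A : the hole of C is modality-free
    refine ⟨par Q (bang unit), par U (bang unit), ?_, ?_, ?_⟩
    · exact step_eDown_ctx (Ctx.parR Q Ctx.hole)
        (Str.Equiv.parUnitR Q).symm (Str.Equiv.refl _)
    · exact hQU.fill (Ctx.parL Ctx.hole (bang unit))
    · exact (master C hC).equiv (Str.Equiv.pL hU) hPp
  · -- Case B : the hole of C is under a modality
    obtain ⟨Qa, Ub, hQa, ⟨S, a, b, hab, ha', hb'⟩, hUb⟩ := hQU
    subst ha' hb'
    have hU2 : Str.Equiv (Ctx.fill K (mApp μ (D.fill unit))) (S.fill b) := by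
      have : Ctx.fill C unit = Ctx.fill K (mApp μ (D.fill unit)) := by
        rw [hCe, Ctx.fill_comp_s5, mCtx_fill]
      rw [← this]
      exact (hUb.trans hU).symm
    obtain ⟨P₂, hP₂, e₂⟩ := (rep_self K hK).transport hU2
    obtain ⟨V, W, h1, h2, h3⟩ := locate hab (hook a b hab) S μ D P₂ hP₂
    refine ⟨V, W, h1.equiv_left hQa, h2, h3.trans (Deriv.ofEquiv ?_)⟩
    have hfin : Ctx.fill C (bang unit) = Ctx.fill K (mApp μ (D.fill (bang unit))) := by
      rw [hCe, Ctx.fill_comp_s5, mCtx_fill]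
    exact e₂.symm.trans ((Str.Equiv.refl _).trans (hfin ▸ hPp))

end MainAssembly

-- ===================== Per-rule hooks =====================
section Hooks
open Str

theorem hook_eUp : ∀ (a b : Str), eUp a b → ∀ (μ : Bool) (D : Ctx) (P' : Str),
    MRep (mApp μ (D.fill unit)) (mApp μ (D.fill (bang unit))) b P' → SOL eUp a P' := by
  intro a b hab μ D P' hP
  cases hab
  cases hP

theorem hook_aiUp : ∀ (a b : Str), aiUp a b → ∀ (μ : Bool) (D : Ctx) (P' : Str),
    MRep (mApp μ (D.fill unit)) (mApp μ (D.fill (bang unit))) b P' → SOL aiUp a P' := by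
  intro a b hab μ D P' hP
  cases hab
  cases hP

theorem hook_wUp : ∀ (a b : Str), wUp a b → ∀ (μ : Bool) (D : Ctx) (P' : Str),
    MRep (mApp μ (D.fill unit)) (mApp μ (D.fill (bang unit))) b P' → SOL wUp a P' := by
  intro a b hab μ D P' hP
  cases hab
  cases hP

theorem hook_aiDown : ∀ (a b : Str), aiDown a b → ∀ (μ : Bool) (D : Ctx) (P' : Str),
    MRep (mApp μ (D.fill unit)) (mApp μ (D.fill (bang unit))) b P' → SOL aiDown a P' := by
  intro a b hab μ D P' hP
  cases hab
  cases hP with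
  | parL _ h' => cases h'
  | parR _ h' => cases h'

theorem hook_sw : ∀ (a b : Str), sw a b → ∀ (μ : Bool) (D : Ctx) (P' : Str),
    MRep (mApp μ (D.fill unit)) (mApp μ (D.fill (bang unit))) b P' → SOL sw a P' := by
  intro a b hab μ D P' hP
  obtain ⟨R, U, T⟩ := hab
  cases hP with
  | parL _ h' =>
    cases h' with
    | tenL _ h'' =>
      obtain ⟨C0, e1, e2⟩ := rep_edown h''
      refine ⟨ten (par (C0.fill (bang unit)) U) T, par (ten (C0.fill (bang unit)) T) U,
        ?_, ?_, ?_⟩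
      · exact step_eDown_ctx (Ctx.tenL (Ctx.parL C0 U) T)
          (Str.Equiv.tL (Str.Equiv.pL e1)) (Str.Equiv.refl _)
      · exact Step.mk' (sw.mk (C0.fill (bang unit)) U T) (Str.Equiv.refl _) (Str.Equiv.refl _)
      · exact Deriv.ofEquiv (Str.Equiv.pL (Str.Equiv.tL e2.symm))
    | tenR _ h'' =>
      obtain ⟨C0, e1, e2⟩ := rep_edown h''
      refine ⟨ten (par R U) (C0.fill (bang unit)), par (ten R (C0.fill (bang unit))) U,
        ?_, ?_, ?_⟩
      · exact step_eDown_ctx (Ctx.tenR (par R U) C0)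
          (Str.Equiv.tR e1) (Str.Equiv.refl _)
      · exact Step.mk' (sw.mk R U (C0.fill (bang unit))) (Str.Equiv.refl _) (Str.Equiv.refl _)
      · exact Deriv.ofEquiv (Str.Equiv.pL (Str.Equiv.tR e2.symm))
  | parR _ h' =>
    obtain ⟨C0, e1, e2⟩ := rep_edown h'
    refine ⟨ten (par R (C0.fill (bang unit))) T, par (ten R T) (C0.fill (bang unit)),
      ?_, ?_, ?_⟩
    · exact step_eDown_ctx (Ctx.tenL (Ctx.parR R C0) T)
        (Str.Equiv.tL (Str.Equiv.pR e1)) (Str.Equiv.refl _)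
    · exact Step.mk' (sw.mk R (C0.fill (bang unit)) T) (Str.Equiv.refl _) (Str.Equiv.refl _)
    · exact Deriv.ofEquiv (Str.Equiv.pR e2.symm)

theorem hook_qDown : ∀ (a b : Str), qDown a b → ∀ (μ : Bool) (D : Ctx) (P' : Str),
    MRep (mApp μ (D.fill unit)) (mApp μ (D.fill (bang unit))) b P' → SOL qDown a P' := by
  intro a b hab μ D P' hP
  obtain ⟨R, T, U, V⟩ := hab
  cases hP with
  | seqL _ h' =>
    cases h' with
    | parL _ h'' =>
      obtain ⟨C0, e1, e2⟩ := rep_edown h''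
      refine ⟨par (seq (C0.fill (bang unit)) T) (seq U V),
        seq (par (C0.fill (bang unit)) U) (par T V), ?_, ?_, ?_⟩
      · exact step_eDown_ctx (Ctx.parL (Ctx.seqL C0 T) (seq U V))
          (Str.Equiv.pL (Str.Equiv.sL e1)) (Str.Equiv.refl _)
      · exact Step.mk' (qDown.mk (C0.fill (bang unit)) T U V)
          (Str.Equiv.refl _) (Str.Equiv.refl _)
      · exact Deriv.ofEquiv (Str.Equiv.sL (Str.Equiv.pL e2.symm))
    | parR _ h'' =>
      obtain ⟨C0, e1, e2⟩ := rep_edown h''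
      refine ⟨par (seq R T) (seq (C0.fill (bang unit)) V),
        seq (par R (C0.fill (bang unit))) (par T V), ?_, ?_, ?_⟩
      · exact step_eDown_ctx (Ctx.parR (seq R T) (Ctx.seqL C0 V))
          (Str.Equiv.pR (Str.Equiv.sL e1)) (Str.Equiv.refl _)
      · exact Step.mk' (qDown.mk R T (C0.fill (bang unit)) V)
          (Str.Equiv.refl _) (Str.Equiv.refl _)
      · exact Deriv.ofEquiv (Str.Equiv.sL (Str.Equiv.pR e2.symm))
  | seqR _ h' =>
    cases h' with
    | parL _ h'' =>
      obtain ⟨C0, e1, e2⟩ := rep_edown h''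
      refine ⟨par (seq R (C0.fill (bang unit))) (seq U V),
        seq (par R U) (par (C0.fill (bang unit)) V), ?_, ?_, ?_⟩
      · exact step_eDown_ctx (Ctx.parL (Ctx.seqR R C0) (seq U V))
          (Str.Equiv.pL (Str.Equiv.sR e1)) (Str.Equiv.refl _)
      · exact Step.mk' (qDown.mk R (C0.fill (bang unit)) U V)
          (Str.Equiv.refl _) (Str.Equiv.refl _)
      · exact Deriv.ofEquiv (Str.Equiv.sR (Str.Equiv.pL e2.symm))
    | parR _ h'' =>
      obtain ⟨C0, e1, e2⟩ := rep_edown h''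
      refine ⟨par (seq R T) (seq U (C0.fill (bang unit))),
        seq (par R U) (par T (C0.fill (bang unit))), ?_, ?_, ?_⟩
      · exact step_eDown_ctx (Ctx.parR (seq R T) (Ctx.seqR U C0))
          (Str.Equiv.pR (Str.Equiv.sR e1)) (Str.Equiv.refl _)
      · exact Step.mk' (qDown.mk R T U (C0.fill (bang unit)))
          (Str.Equiv.refl _) (Str.Equiv.refl _)
      · exact Deriv.ofEquiv (Str.Equiv.sR (Str.Equiv.pR e2.symm))

theorem hook_qUp : ∀ (a b : Str), qUp a b → ∀ (μ : Bool) (D : Ctx) (P' : Str),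
    MRep (mApp μ (D.fill unit)) (mApp μ (D.fill (bang unit))) b P' → SOL qUp a P' := by
  intro a b hab μ D P' hP
  obtain ⟨R, T, U, V⟩ := hab
  cases hP with
  | tenL _ h' =>
    cases h' with
    | seqL _ h'' =>
      obtain ⟨C0, e1, e2⟩ := rep_edown h''
      refine ⟨seq (ten (C0.fill (bang unit)) T) (ten U V),
        ten (seq (C0.fill (bang unit)) U) (seq T V), ?_, ?_, ?_⟩
      · exact step_eDown_ctx (Ctx.seqL (Ctx.tenL C0 T) (ten U V))
          (Str.Equiv.sL (Str.Equiv.tL e1)) (Str.Equiv.refl _)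
      · exact Step.mk' (qUp.mk (C0.fill (bang unit)) T U V)
          (Str.Equiv.refl _) (Str.Equiv.refl _)
      · exact Deriv.ofEquiv (Str.Equiv.tL (Str.Equiv.sL e2.symm))
    | seqR _ h'' =>
      obtain ⟨C0, e1, e2⟩ := rep_edown h''
      refine ⟨seq (ten R T) (ten (C0.fill (bang unit)) V),
        ten (seq R (C0.fill (bang unit))) (seq T V), ?_, ?_, ?_⟩
      · exact step_eDown_ctx (Ctx.seqR (ten R T) (Ctx.tenL C0 V))
          (Str.Equiv.sR (Str.Equiv.tL e1)) (Str.Equiv.refl _)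
      · exact Step.mk' (qUp.mk R T (C0.fill (bang unit)) V)
          (Str.Equiv.refl _) (Str.Equiv.refl _)
      · exact Deriv.ofEquiv (Str.Equiv.tL (Str.Equiv.sR e2.symm))
  | tenR _ h' =>
    cases h' with
    | seqL _ h'' =>
      obtain ⟨C0, e1, e2⟩ := rep_edown h''
      refine ⟨seq (ten R (C0.fill (bang unit))) (ten U V),
        ten (seq R U) (seq (C0.fill (bang unit)) V), ?_, ?_, ?_⟩
      · exact step_eDown_ctx (Ctx.seqL (Ctx.tenR R C0) (ten U V))
          (Str.Equiv.sL (Str.Equiv.tR e1)) (Str.Equiv.refl _)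
      · exact Step.mk' (qUp.mk R (C0.fill (bang unit)) U V)
          (Str.Equiv.refl _) (Str.Equiv.refl _)
      · exact Deriv.ofEquiv (Str.Equiv.tR (Str.Equiv.sL e2.symm))
    | seqR _ h'' =>
      obtain ⟨C0, e1, e2⟩ := rep_edown h''
      refine ⟨seq (ten R T) (ten U (C0.fill (bang unit))),
        ten (seq R U) (seq T (C0.fill (bang unit))), ?_, ?_, ?_⟩
      · exact step_eDown_ctx (Ctx.seqR (ten R T) (Ctx.tenR U C0))
          (Str.Equiv.sR (Str.Equiv.tR e1)) (Str.Equiv.refl _)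
      · exact Step.mk' (qUp.mk R T U (C0.fill (bang unit)))
          (Str.Equiv.refl _) (Str.Equiv.refl _)
      · exact Deriv.ofEquiv (Str.Equiv.tR (Str.Equiv.sR e2.symm))

theorem hook_pDown : ∀ (a b : Str), pDown a b → ∀ (μ : Bool) (D : Ctx) (P' : Str),
    MRep (mApp μ (D.fill unit)) (mApp μ (D.fill (bang unit))) b P' → SOL pDown a P' := by
  intro a b hab μ D P' hP
  obtain ⟨R, T⟩ := hab
  cases hP with
  | parL _ h' =>
    cases h' with
    | baseB hq =>
      obtain ⟨hμ, hR⟩ := bang_mu hq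
      subst hμ
      refine ⟨bang (par (D.fill (bang unit)) T), par (bang (D.fill (bang unit))) (quest T),
        ?_, ?_, ?_⟩
      · exact step_eDown_ctx (Ctx.bang (Ctx.parL D T))
          (Str.Equiv.bangCongr (Str.Equiv.pL hR)) (Str.Equiv.refl _)
      · exact Step.mk' (pDown.mk (D.fill (bang unit)) T) (Str.Equiv.refl _) (Str.Equiv.refl _)
      · exact Deriv.ofEquiv (Str.Equiv.refl _)
  | parR _ h' =>
    cases h' with
    | baseQ hq =>
      obtain ⟨hμ, hT⟩ := quest_mu hq
      subst hμ
      refine ⟨bang (par R (D.fill (bang unit))), par (bang R) (quest (D.fill (bang unit))),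
        ?_, ?_, ?_⟩
      · exact step_eDown_ctx (Ctx.bang (Ctx.parR R D))
          (Str.Equiv.bangCongr (Str.Equiv.pR hT)) (Str.Equiv.refl _)
      · exact Step.mk' (pDown.mk R (D.fill (bang unit))) (Str.Equiv.refl _) (Str.Equiv.refl _)
      · exact Deriv.ofEquiv (Str.Equiv.refl _)

theorem hook_pUp : ∀ (a b : Str), pUp a b → ∀ (μ : Bool) (D : Ctx) (P' : Str),
    MRep (mApp μ (D.fill unit)) (mApp μ (D.fill (bang unit))) b P' → SOL pUp a P' := by
  intro a b hab μ D P' hP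
  obtain ⟨T, R⟩ := hab
  cases hP with
  | baseQ hq =>
    obtain ⟨hμ, hTR⟩ := quest_mu hq
    subst hμ
    rcases ctx_decomp D with hD | ⟨K, μ₂, D₂, hDe, hK⟩
    · refine ⟨ten (quest (par T (bang unit))) (bang R),
        quest (ten (par T (bang unit)) R), ?_, ?_, ?_⟩
      · exact step_eDown_ctx (Ctx.tenL (Ctx.quest (Ctx.parR T Ctx.hole)) (bang R))
          (Str.Equiv.tL (Str.Equiv.questCongr (Str.Equiv.parUnitR T).symm)) (Str.Equiv.refl _)
      · exact Step.mk' (pUp.mk (par T (bang unit)) R) (Str.Equiv.refl _) (Str.Equiv.refl _)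
      · refine Deriv.fill (Ctx.quest Ctx.hole) ?_
        refine Deriv.cons
          (Step.mk' (swq_sw (sw.mk T (bang unit) R)) (Str.Equiv.refl _) (Str.Equiv.refl _)) ?_
        exact (master D hD).equiv (Str.Equiv.pL hTR) (Str.Equiv.refl _)
    · have hTR' : Str.Equiv (Ctx.fill K (mApp μ₂ (D₂.fill unit))) (ten T R) := by
        have : Ctx.fill D unit = Ctx.fill K (mApp μ₂ (D₂.fill unit)) := by
          rw [hDe, Ctx.fill_comp_s5, mCtx_fill]
        rw [← this]
        exact hTR.symm
      obtain ⟨P₂, hP₂, e₂⟩ := (rep_self K hK).transport hTR'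
      have hfin : Ctx.fill D (bang unit) = Ctx.fill K (mApp μ₂ (D₂.fill (bang unit))) := by
        rw [hDe, Ctx.fill_comp_s5, mCtx_fill]
      cases hP₂ with
      | tenL _ h₂ =>
        obtain ⟨C0, e1, e2⟩ := rep_edown h₂
        refine ⟨ten (quest (C0.fill (bang unit))) (bang R),
          quest (ten (C0.fill (bang unit)) R), ?_, ?_, ?_⟩
        · exact step_eDown_ctx (Ctx.tenL (Ctx.quest C0) (bang R))
            (Str.Equiv.tL (Str.Equiv.questCongr e1)) (Str.Equiv.refl _)
        · exact Step.mk' (pUp.mk (C0.fill (bang unit)) R) (Str.Equiv.refl _) (Str.Equiv.refl _)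
        · refine Deriv.ofEquiv ?_
          show Str.Equiv (quest (ten (C0.fill (bang unit)) R)) (mApp false (D.fill (bang unit)))
          have h3 : Str.Equiv (ten (C0.fill (bang unit)) R) (Ctx.fill K (mApp μ₂ (D₂.fill (bang unit)))) :=
            (Str.Equiv.tL e2.symm).trans e₂.symm
          rw [show mApp false (D.fill (bang unit)) = quest (D.fill (bang unit)) from rfl, hfin]
          exact Str.Equiv.questCongr h3
      | tenR _ h₂ =>
        obtain ⟨C0, e1, e2⟩ := rep_edown h₂
        refine ⟨ten (quest T) (bang (C0.fill (bang unit))),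
          quest (ten T (C0.fill (bang unit))), ?_, ?_, ?_⟩
        · exact step_eDown_ctx (Ctx.tenR (quest T) (Ctx.bang C0))
            (Str.Equiv.tR (Str.Equiv.bangCongr e1)) (Str.Equiv.refl _)
        · exact Step.mk' (pUp.mk T (C0.fill (bang unit))) (Str.Equiv.refl _) (Str.Equiv.refl _)
        · refine Deriv.ofEquiv ?_
          show Str.Equiv (quest (ten T (C0.fill (bang unit)))) (mApp false (D.fill (bang unit)))
          have h3 : Str.Equiv (ten T (C0.fill (bang unit))) (Ctx.fill K (mApp μ₂ (D₂.fill (bang unit)))) :=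
            (Str.Equiv.tR e2.symm).trans e₂.symm
          rw [show mApp false (D.fill (bang unit)) = quest (D.fill (bang unit)) from rfl, hfin]
          exact Str.Equiv.questCongr h3

theorem hook_gDown : ∀ (a b : Str), gDown a b → ∀ (μ : Bool) (D : Ctx) (P' : Str),
    MRep (mApp μ (D.fill unit)) (mApp μ (D.fill (bang unit))) b P' → SOL gDown a P' := by
  intro a b hab μ D P' hP
  obtain ⟨R⟩ := hab
  cases hP with
  | baseQ hq =>
    obtain ⟨hμ, hR⟩ := quest_mu hq
    subst hμ
    rcases ctx_decomp D with hD | ⟨K, μ₂, D₂, hDe, hK⟩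
    · refine ⟨quest (quest (par R (bang unit))), quest (par R (bang unit)), ?_, ?_, ?_⟩
      · exact step_eDown_ctx (Ctx.quest (Ctx.quest (Ctx.parR R Ctx.hole)))
          (Str.Equiv.questCongr (Str.Equiv.questCongr (Str.Equiv.parUnitR R).symm))
          (Str.Equiv.refl _)
      · exact Step.mk' (gDown.mk (par R (bang unit))) (Str.Equiv.refl _) (Str.Equiv.refl _)
      · exact Deriv.fill (Ctx.quest Ctx.hole)
          ((master D hD).equiv (Str.Equiv.pL hR) (Str.Equiv.refl _))
    · have hR' : Str.Equiv (Ctx.fill K (mApp μ₂ (D₂.fill unit))) R := by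
        have : Ctx.fill D unit = Ctx.fill K (mApp μ₂ (D₂.fill unit)) := by
          rw [hDe, Ctx.fill_comp_s5, mCtx_fill]
        rw [← this]
        exact hR.symm
      obtain ⟨P₂, hP₂, e₂⟩ := (rep_self K hK).transport hR'
      obtain ⟨C0, e1, e2⟩ := rep_edown hP₂
      have hfin : Ctx.fill D (bang unit) = Ctx.fill K (mApp μ₂ (D₂.fill (bang unit))) := by
        rw [hDe, Ctx.fill_comp_s5, mCtx_fill]
      refine ⟨quest (quest (C0.fill (bang unit))), quest (C0.fill (bang unit)), ?_, ?_, ?_⟩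
      · exact step_eDown_ctx (Ctx.quest (Ctx.quest C0))
          (Str.Equiv.questCongr (Str.Equiv.questCongr e1)) (Str.Equiv.refl _)
      · exact Step.mk' (gDown.mk (C0.fill (bang unit))) (Str.Equiv.refl _) (Str.Equiv.refl _)
      · refine Deriv.ofEquiv ?_
        show Str.Equiv (quest (C0.fill (bang unit))) (mApp false (D.fill (bang unit)))
        rw [show mApp false (D.fill (bang unit)) = quest (D.fill (bang unit)) from rfl, hfin]
        exact Str.Equiv.questCongr (e2.symm.trans e₂.symm)

end Hooks

/-- The rule e↓ permutes over each of e↑, ai↓, ai↑, s, q↓, q↑,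
p↓, p↑, w↑, g↓ by the system {s, q↓, q↑}: whenever (top-down) an instance of
such a rule ρ is followed by an instance of e↓, the two steps can be replaced
by an instance of e↓, then an instance of ρ, then a derivation in {s, q↓, q↑},
with the same premise and conclusion. -/
theorem eDown_permutes_over :
    ∀ r ∈ ({eUp, aiDown, aiUp, sw, qDown, qUp, pDown, pUp, wUp, gDown} :
        Set (Str → Str → Prop)),
      ∀ Q U P : Str, Step r Q U → Step eDown U P →
        ∃ V W : Str, Step eDown Q V ∧ Step r V W ∧ Deriv swq W P := by
  intro r hr
  simp only [Set.mem_insert_iff, Set.mem_singleton_iff] at hr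
  rcases hr with rfl | rfl | rfl | rfl | rfl | rfl | rfl | rfl | rfl | rfl
  · exact main_generic hook_eUp
  · exact main_generic hook_aiDown
  · exact main_generic hook_aiUp
  · exact main_generic hook_sw
  · exact main_generic hook_qDown
  · exact main_generic hook_qUp
  · exact main_generic hook_pDown
  · exact main_generic hook_pUp
  · exact main_generic hook_wUp
  · exact main_generic hook_gDown
end
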